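/- arXiv:1908.03551 — 3 statements merged into one kernel-verified Lean document; each statement's English description precedes it below -/
import Mathlib

section
/- Let Σ = {a, b, c} with independence relation given exactly by a I b (and b I a), and let E = a✶b✶c(ab)✶(a✶ + b✶) + (ab)✶(a✶ + b✶)ca✶b✶. Then for no N ∈ ℕ does the language ⟦E⟧ have uniform rank at most N; i.e., there is a regular language that has rank but no uniform rank. -/
open RegularExpression
open scoped Classical

universe u

variable {α : Type u}

/-- Two words are independent if every letter of the first is independent
of every letter of the second. -/
def WIndep (I : α → α → Prop) (u v : List α) : Prop :=
  ∀ a ∈ u, ∀ b ∈ v, I a b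

/-- Trace equivalence: the least equivalence relation on words containing
all pairs (x ++ [a,b] ++ y, x ++ [b,a] ++ y) with a I b. -/
inductive TrEq (I : α → α → Prop) : List α → List α → Prop
  | swap (x y : List α) {a b : α} : I a b → TrEq I (x ++ [a, b] ++ y) (x ++ [b, a] ++ y)
  | refl (u : List α) : TrEq I u u
  | symm {u v : List α} : TrEq I u v → TrEq I v u
  | trans {u v w : List α} : TrEq I u v → TrEq I v w → TrEq I u w

/-- Trace closure of a language. -/
def TrClosure (I : α → α → Prop) (L : Set (List α)) : Set (List α) :=
  {w | ∃ z ∈ L, TrEq I w z}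

/-- u ⊲ z ⊳ v with exactly n blocks of u: there are nonempty words u₁,…,uₙ and
words v₀,…,vₙ (with v₁,…,v_{n-1} nonempty) such that u = u₁⋯uₙ, v = v₀⋯vₙ,
z = v₀u₁v₁⋯uₙvₙ and vⱼ I uᵢ whenever j < i. -/
def ScatN (I : α → α → Prop) (n : ℕ) (u z v : List α) : Prop :=
  ∃ us vs : ℕ → List α,
    (∀ i, 1 ≤ i → i ≤ n → us i ≠ []) ∧
    (∀ j, 1 ≤ j → j ≤ n - 1 → vs j ≠ []) ∧
    u = ((List.range n).map (fun i => us (i + 1))).flatten ∧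
    v = ((List.range (n + 1)).map vs).flatten ∧
    z = vs 0 ++ ((List.range n).map (fun i => us (i + 1) ++ vs (i + 1))).flatten ∧
    (∀ i j, 1 ≤ i → i ≤ n → j < i → WIndep I (vs j) (us i))

/-- u ⊲ z ⊳ v -/
def Scat (I : α → α → Prop) (u z v : List α) : Prop :=
  ∃ n, ScatN I n u z v

/-- u ∼⊲ z ⊳ v -/
def EqScat (I : α → α → Prop) (u z v : List α) : Prop :=
  ∃ u', TrEq I u u' ∧ Scat I u' z v

/-- u ∼⊲ z ⊳∼ v -/
def EqScatEq (I : α → α → Prop) (u z v : List α) : Prop :=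
  ∃ u' v', TrEq I u u' ∧ Scat I u' z v' ∧ TrEq I v' v

/-- u ∼⊲_N z ⊳∼ v : as EqScatEq, with the number of blocks bounded by N -/
def EqScatEqLe (I : α → α → Prop) (N : ℕ) (u z v : List α) : Prop :=
  ∃ u' v', TrEq I u u' ∧ (∃ n ≤ N, ScatN I n u' z v') ∧ TrEq I v' v

/-- Reordering concatenation of words. -/
def rconc (I : α → α → Prop) : List α → List α → Set (List α)
  | [], v => {v}
  | a :: u, [] => {a :: u}
  | a :: u, b :: v =>
      (List.cons a) '' rconc I u (b :: v) ∪
      {z | WIndep I (a :: u) [b] ∧ ∃ w ∈ rconc I (a :: u) v, z = b :: w}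
termination_by u v => u.length + v.length

/-- Reordering concatenation lifted to languages. -/
def rconcL (I : α → α → Prop) (L L' : Set (List α)) : Set (List α) :=
  {z | ∃ u ∈ L, ∃ v ∈ L', z ∈ rconc I u v}

/-- The reorderable part of a language w.r.t. a word. -/
def RPart (I : α → α → Prop) (u : List α) (L : Set (List α)) : Set (List α) :=
  {v ∈ L | WIndep I v u}

/-- The reordering derivative of a language along a word. -/
def RDeriv (I : α → α → Prop) (u : List α) (L : Set (List α)) : Set (List α) :=
  {v | ∃ z ∈ L, EqScat I u z v}

/-- Syntactic reorderable part of a regexp w.r.t. a letter. -/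
noncomputable def Rexp (I : α → α → Prop) (a : α) : RegularExpression α → RegularExpression α
  | zero => zero
  | epsilon => epsilon
  | char b => if I a b then char b else zero
  | plus E F => plus (Rexp I a E) (Rexp I a F)
  | comp E F => comp (Rexp I a E) (Rexp I a F)
  | RegularExpression.star E => star (Rexp I a E)

/-- Brzozowski reordering derivative of a regexp along a letter. -/
noncomputable def Dexp (I : α → α → Prop) (a : α) : RegularExpression α → RegularExpression α
  | zero => zero
  | epsilon => zero
  | char b => if a = b then epsilon else zero
  | plus E F => plus (Dexp I a E) (Dexp I a F)
  | comp E F => plus (comp (Dexp I a E) F) (comp (Rexp I a E) (Dexp I a F))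
  | RegularExpression.star E => comp (star (Rexp I a E)) (comp (Dexp I a E) (star E))

/-- Syntactic reorderable part along a word. -/
noncomputable def RexpW (I : α → α → Prop) (u : List α) (E : RegularExpression α) :
    RegularExpression α :=
  u.foldl (fun E a => Rexp I a E) E

/-- Brzozowski reordering derivative along a word. -/
noncomputable def DexpW (I : α → α → Prop) (u : List α) (E : RegularExpression α) :
    RegularExpression α :=
  u.foldl (fun E a => Dexp I a E) E

/-- Antimirov reordering parts-of-derivatives along a letter. -/
inductive Antim (I : α → α → Prop) : RegularExpression α → α → RegularExpression α → Prop
  | chr (a : α) : Antim I (char a) a epsilon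
  | plusL {E F : RegularExpression α} {a E'} : Antim I E a E' → Antim I (plus E F) a E'
  | plusR {E F : RegularExpression α} {a F'} : Antim I F a F' → Antim I (plus E F) a F'
  | compL {E F : RegularExpression α} {a E'} : Antim I E a E' → Antim I (comp E F) a (comp E' F)
  | compR {E F : RegularExpression α} {a F'} :
      Antim I F a F' → Antim I (comp E F) a (comp (Rexp I a E) F')
  | st {E : RegularExpression α} {a E'} :
      Antim I E a E' → Antim I (star E) a (comp (star (Rexp I a E)) (comp E' (star E)))

/-- Antimirov reordering parts-of-derivatives along a word. -/
inductive AntimW (I : α → α → Prop) : RegularExpression α → List α → RegularExpression α → Prop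
  | nil (E : RegularExpression α) : AntimW I E [] E
  | snoc {E : RegularExpression α} {u E' a E''} :
      AntimW I E u E' → Antim I E' a E'' → AntimW I E (u ++ [a]) E''

/-- The dependence graph of a word: vertices are positions; distinct positions
are adjacent when their letters are not independent. -/
def depGraph (I : α → α → Prop) (w : List α) : SimpleGraph (Fin w.length) where
  Adj i j := i ≠ j ∧ ¬(I (w.get i) (w.get j) ∧ I (w.get j) (w.get i))
  symm := by
    constructor
    intro i j h
    exact ⟨h.1.symm, fun hc => h.2 ⟨hc.2, hc.1⟩⟩
  loopless := by
    constructor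
    intro i h
    exact h.1 rfl

/-- A word is connected if its dependence graph is connected. -/
def WordConnected (I : α → α → Prop) (w : List α) : Prop :=
  (depGraph I w).Preconnected

/-- Least fixed point star for the trace-closing semantics. -/
def starI (I : α → α → Prop) (L : Set (List α)) : Set (List α) :=
  sInf {X | {([] : List α)} ∪ rconcL I L X ⊆ X}

/-- Trace-closing semantics of regular expressions. -/
def langI (I : α → α → Prop) : RegularExpression α → Set (List α)
  | zero => ∅
  | epsilon => {[]}
  | char a => {[a]}
  | plus E F => langI I E ∪ langI I F
  | comp E F => rconcL I (langI I E) (langI I F)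
  | RegularExpression.star E => starI I (langI I E)

/-- L has (scattering) rank at most N. -/
def HasRankLe (I : α → α → Prop) (L : Set (List α)) (N : ℕ) : Prop :=
  ∀ u v, u ++ v ∈ TrClosure I L → ∃ z ∈ L, EqScatEqLe I N u z v

/-- L has uniform (scattering) rank at most N. -/
def HasUniformRankLe (I : α → α → Prop) (L : Set (List α)) (N : ℕ) : Prop :=
  ∀ w ∈ TrClosure I L, ∃ z ∈ L, ∀ u v, w = u ++ v → EqScatEqLe I N u z v

/-- Star-connected regular expressions. -/
inductive StarConnected (I : α → α → Prop) : RegularExpression α → Prop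
  | zero : StarConnected I zero
  | epsilon : StarConnected I epsilon
  | chr (a : α) : StarConnected I (char a)
  | plus {E F : RegularExpression α} :
      StarConnected I E → StarConnected I F → StarConnected I (plus E F)
  | comp {E F : RegularExpression α} :
      StarConnected I E → StarConnected I F → StarConnected I (comp E F)
  | st {E : RegularExpression α} :
      StarConnected I E → (∀ w ∈ E.matches', WordConnected I w) → StarConnected I (star E)

/-- Refined Antimirov reordering parts-of-derivatives along a letter. -/
inductive RAntim (I : α → α → Prop) :
    RegularExpression α → α → RegularExpression α → RegularExpression α → Prop
  | chr (a : α) : RAntim I (char a) a epsilon epsilon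
  | plusL {E F : RegularExpression α} {a El Er} :
      RAntim I E a El Er → RAntim I (plus E F) a El Er
  | plusR {E F : RegularExpression α} {a Fl Fr} :
      RAntim I F a Fl Fr → RAntim I (plus E F) a Fl Fr
  | compL {E F : RegularExpression α} {a El Er} :
      RAntim I E a El Er → RAntim I (comp E F) a El (comp Er F)
  | compR {E F : RegularExpression α} {a Fl Fr} :
      RAntim I F a Fl Fr → RAntim I (comp E F) a (comp (Rexp I a E) Fl) Fr
  | st {E : RegularExpression α} {a El Er} :
      RAntim I E a El Er →
      RAntim I (star E) a (comp (star (Rexp I a E)) El) (comp Er (star E))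

/-- Refined Antimirov relation lifted to nonempty lists of regexps (unbounded). -/
inductive RAntimL (I : α → α → Prop) :
    List (RegularExpression α) → α → List (RegularExpression α) → Prop
  | split {Γ Δ : List (RegularExpression α)} {E : RegularExpression α} {a El Er} :
      RAntim I E a El Er →
      RAntimL I (Γ ++ E :: Δ) a (Γ.map (Rexp I a) ++ El :: Er :: Δ)
  | dropL {Γ Δ : List (RegularExpression α)} {E : RegularExpression α} {a El Er} :
      RAntim I E a El Er → [] ∈ El.matches' → Γ ≠ [] →
      RAntimL I (Γ ++ E :: Δ) a (Γ.map (Rexp I a) ++ Er :: Δ)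
  | dropR {Γ Δ : List (RegularExpression α)} {E : RegularExpression α} {a El Er} :
      RAntim I E a El Er → [] ∈ Er.matches' → Δ ≠ [] →
      RAntimL I (Γ ++ E :: Δ) a (Γ.map (Rexp I a) ++ El :: Δ)
  | dropBoth {Γ Δ : List (RegularExpression α)} {E : RegularExpression α} {a El Er} :
      RAntim I E a El Er → [] ∈ El.matches' → [] ∈ Er.matches' → Γ ≠ [] → Δ ≠ [] →
      RAntimL I (Γ ++ E :: Δ) a (Γ.map (Rexp I a) ++ Δ)

/-- Refined Antimirov relation along a word (unbounded). -/
inductive RAntimW (I : α → α → Prop) :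
    RegularExpression α → List α → List (RegularExpression α) → Prop
  | nil (E : RegularExpression α) : RAntimW I E [] [E]
  | snoc {E : RegularExpression α} {u Γ a Γ'} :
      RAntimW I E u Γ → RAntimL I Γ a Γ' → RAntimW I E (u ++ [a]) Γ'

/-- N-bounded refined Antimirov relation lifted to nonempty lists of regexps. -/
inductive RAntimLN (I : α → α → Prop) (N : ℕ) :
    List (RegularExpression α) → α → List (RegularExpression α) → Prop
  | split {Γ Δ : List (RegularExpression α)} {E : RegularExpression α} {a El Er} :
      RAntim I E a El Er → Γ.length + Δ.length < N →
      RAntimLN I N (Γ ++ E :: Δ) a (Γ.map (Rexp I a) ++ El :: Er :: Δ)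
  | dropL {Γ Δ : List (RegularExpression α)} {E : RegularExpression α} {a El Er} :
      RAntim I E a El Er → [] ∈ El.matches' → Γ ≠ [] →
      RAntimLN I N (Γ ++ E :: Δ) a (Γ.map (Rexp I a) ++ Er :: Δ)
  | dropR {Γ Δ : List (RegularExpression α)} {E : RegularExpression α} {a El Er} :
      RAntim I E a El Er → [] ∈ Er.matches' → Δ ≠ [] →
      RAntimLN I N (Γ ++ E :: Δ) a (Γ.map (Rexp I a) ++ El :: Δ)
  | dropBoth {Γ Δ : List (RegularExpression α)} {E : RegularExpression α} {a El Er} :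
      RAntim I E a El Er → [] ∈ El.matches' → [] ∈ Er.matches' → Γ ≠ [] → Δ ≠ [] →
      RAntimLN I N (Γ ++ E :: Δ) a (Γ.map (Rexp I a) ++ Δ)

/-- N-bounded refined Antimirov relation along a word. -/
inductive RAntimWN (I : α → α → Prop) (N : ℕ) :
    RegularExpression α → List α → List (RegularExpression α) → Prop
  | nil (E : RegularExpression α) : RAntimWN I N E [] [E]
  | snoc {E : RegularExpression α} {u Γ a Γ'} :
      RAntimWN I N E u Γ → RAntimLN I N Γ a Γ' → RAntimWN I N E (u ++ [a]) Γ'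

/-!
Let `M = N + 1` and `w = aᴹbᴹcaᴹbᴹ`, which is trace equivalent to `aᴹbᴹc(ab)ᴹ ∈ ⟦E⟧`. Since `a`
and `b` both depend on `c`, the projections of `w` onto `{a, c}` and `{b, c}` are invariants of
trace equivalence. The witness `z ∈ ⟦E⟧` that uniform rank provides for `w` satisfies `z ∼ w`
(take the split `v = ε`), so these projections force `z` to be `aᴹbᴹc(ab)ᴹ` or `(ab)ᴹcaᴹbᴹ`.

For `z = aᴹbᴹc(ab)ᴹ` split `w` as `u = aᴹbᴹcaᴹ`, `v = bᴹ`: the `c` must lie in the first block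
of `u` (a nonempty `b`-block before it would have to commute with `c`), so every block of `v` is a
factor of `(ab)ᴹ` made of `b`'s, hence a single letter, and `v` needs `M` blocks. For
`z = (ab)ᴹcaᴹbᴹ` split `w` as `u = aᴹ`, `v = bᴹcaᴹbᴹ`: the `c` must lie in the last block of `v`,
so every block of `u` is a single `a` inside `(ab)ᴹ`, and `u` needs `M` blocks.
-/

namespace TrEq

variable {I : α → α → Prop} {u v : List α}

theorem perm (h : TrEq I u v) : u.Perm v := by
  induction h with
  | swap x y _ => exact ((List.Perm.swap _ _ []).append_left x).append_right y
  | refl u => exact .refl u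
  | symm _ ih => exact ih.symm
  | trans _ _ ih₁ ih₂ => exact ih₁.trans ih₂

theorem append_left (h : TrEq I u v) (x : List α) : TrEq I (x ++ u) (x ++ v) := by
  induction h with
  | swap y z hab => simpa only [List.append_assoc] using swap (x ++ y) z hab
  | refl u => exact refl _
  | symm _ ih => exact symm ih
  | trans _ _ ih₁ ih₂ => exact trans ih₁ ih₂

theorem append_right (h : TrEq I u v) (y : List α) : TrEq I (u ++ y) (v ++ y) := by
  induction h with
  | swap x z hab => simpa only [List.append_assoc] using swap x (z ++ y) hab
  | refl u => exact refl _
  | symm _ ih => exact symm ih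
  | trans _ _ ih₁ ih₂ => exact trans ih₁ ih₂

theorem filter_eq (p : α → Bool) (hp : ∀ a b, I a b → p a = false ∨ p b = false)
    (h : TrEq I u v) : u.filter p = v.filter p := by
  induction h with
  | swap x y hab =>
    rcases hp _ _ hab with h | h <;> simp [List.filter_append, List.filter_cons, h]
  | refl u => rfl
  | symm _ ih => exact ih.symm
  | trans _ _ ih₁ ih₂ => exact ih₁.trans ih₂

end TrEq

theorem trEq_replicate_append_singleton {I : α → α → Prop} {a b : α} (hab : I a b) (k : ℕ) :
    TrEq I (List.replicate k a ++ [b]) (b :: List.replicate k a) := by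
  induction k with
  | zero => exact .refl _
  | succ k ih =>
    have hswap : TrEq I ([a, b] ++ List.replicate k a) ([b, a] ++ List.replicate k a) :=
      .swap [] _ hab
    simpa [List.replicate_succ] using (ih.append_left [a]).trans hswap

theorem trEq_replicate_append_replicate {I : α → α → Prop} {a b : α} (hab : I a b) (k : ℕ) :
    TrEq I (List.replicate k a ++ List.replicate k b) (List.replicate k [a, b]).flatten := by
  induction k with
  | zero => exact .refl _
  | succ k ih =>
    have hmove := ((trEq_replicate_append_singleton hab k).append_right
      (List.replicate k b)).append_left [a]
    simpa [List.replicate_succ] using hmove.trans (ih.append_left [a, b])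

theorem List.IsChain.length_le_one_of_infix {l s : List α} {x : α}
    (hl : l.IsChain (· ≠ ·)) (hs : ∀ y ∈ s, y = x) (h : s <:+: l) : s.length ≤ 1 := by
  rcases s with _ | ⟨y, _ | ⟨y', t⟩⟩
  · simp
  · simp
  · exact absurd ((hs y (by simp)).trans (hs y' (by simp)).symm)
      (List.isChain_cons_cons.mp (hl.infix h)).1

theorem isChain_ne_flatten_replicate_pair {a b : α} (hab : a ≠ b) (k : ℕ) :
    (List.replicate k [a, b]).flatten.IsChain (· ≠ ·) := by
  have hb : ∀ k, (b :: (List.replicate k [a, b]).flatten).IsChain (· ≠ ·) := by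
    intro k
    induction k with
    | zero => exact List.isChain_singleton b
    | succ k ih => simpa [List.replicate_succ, List.isChain_cons_cons, hab, hab.symm] using ih
  cases k with
  | zero => exact List.isChain_nil
  | succ k => simpa [List.replicate_succ, List.isChain_cons_cons, hab] using hb k

theorem length_flatten_map_range_le_of_length_le_one {n : ℕ} (f : ℕ → List α)
    (h : ∀ i < n, (f i).length ≤ 1) : ((List.range n).map f).flatten.length ≤ n := by
  rw [List.length_flatten, List.map_map]
  have hle := List.sum_le_card_nsmul ((List.range n).map (List.length ∘ f)) 1 (by simpa using h)
  simpa using hle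

theorem suffix_of_append_eq_append_cons {x r p s : List α} {c : α}
    (h : x ++ r = p ++ c :: s) (hcx : c ∈ x) (hcp : c ∉ p) : r <:+ s := by
  rcases List.append_eq_append_iff.mp h with ⟨t, rfl, -⟩ | ⟨t, rfl, ht⟩
  · simp_all
  · rcases t with _ | ⟨c', t⟩
    · simp_all
    · exact ⟨t, (List.cons.inj ht).2.symm⟩

theorem prefix_of_append_eq_append_cons {q r p s : List α} {c : α}
    (h : q ++ r = p ++ c :: s) (hcq : c ∉ q) : q <+: p := by
  rcases List.append_eq_append_iff.mp h with ⟨t, rfl, -⟩ | ⟨t, rfl, ht⟩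
  · exact List.prefix_append q t
  · rcases t with _ | ⟨c', t⟩
    · simp
    · simp_all

namespace ScatN

variable {I : α → α → Prop} {n : ℕ} {u z v p s : List α} {a b c : α}

theorem eq_of_right_nil (h : ScatN I n u z []) : z = u := by
  obtain ⟨us, vs, -, -, rfl, hv, rfl, -⟩ := h
  have hvs : ∀ j < n + 1, vs j = [] := fun j hj =>
    List.flatten_eq_nil_iff.mp hv.symm _ (List.mem_map_of_mem (List.mem_range.mpr hj))
  rw [hvs 0 n.succ_pos, List.nil_append]
  congr 1
  refine List.map_congr_left fun i hi => ?_
  rw [hvs (i + 1) (by simp at hi; omega), List.append_nil]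

theorem length_right_le (h : ScatN I n u z v) (hz : z = p ++ c :: s) (hcp : c ∉ p)
    (hs : s.IsChain (· ≠ ·)) (hcu : c ∈ u) (hv : ∀ x ∈ v, x = b) (hbc : ¬ I b c) :
    v.length ≤ n := by
  obtain ⟨us, vs, -, hvs, rfl, rfl, rfl, hind⟩ := h
  have hvs_b : ∀ j ≤ n, ∀ x ∈ vs j, x = b := fun j hj x hx =>
    hv x (List.mem_flatten.mpr ⟨_, List.mem_map_of_mem (List.mem_range.mpr (by omega)), hx⟩)
  obtain ⟨i, hi, hci⟩ : ∃ i < n, c ∈ us (i + 1) := by simpa using hcu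
  obtain ⟨m, rfl⟩ : ∃ m, n = m + 1 := ⟨n - 1, by omega⟩
  have hi0 : i = 0 := by
    by_contra hi0
    obtain ⟨y, hy⟩ := List.exists_mem_of_ne_nil _ (hvs 1 le_rfl (by omega))
    exact hbc (hvs_b 1 (by omega) y hy ▸ hind (i + 1) 1 (by omega) (by omega) (by omega) y hy c hci)
  subst hi0
  have hvs0 : vs 0 = [] := List.eq_nil_iff_forall_not_mem.mpr fun y hy =>
    hbc (hvs_b 0 (by omega) y hy ▸ hind 1 0 le_rfl (by omega) one_pos y hy c hci)
  rw [List.range_succ_eq_map, List.map_cons, List.flatten_cons, hvs0, List.nil_append,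
    List.append_assoc, List.map_map] at hz
  have hrest := suffix_of_append_eq_append_cons hz hci hcp
  have hblock : ∀ j < m + 1, (vs (j + 1)).length ≤ 1 := by
    intro j hj
    refine hs.length_le_one_of_infix (hvs_b (j + 1) (by omega))
      (List.IsInfix.trans ?_ hrest.isInfix)
    rcases j with _ | j
    · exact (List.prefix_append _ _).isInfix
    · refine ((List.suffix_append (us (j + 2)) _).isInfix.trans (List.infix_of_mem_flatten
        (List.mem_map.mpr ⟨j, List.mem_range.mpr (by omega), rfl⟩))).trans
        (List.suffix_append _ _).isInfix
  rw [List.range_succ_eq_map, List.map_cons, List.flatten_cons, hvs0, List.nil_append,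
    List.map_map]
  exact length_flatten_map_range_le_of_length_le_one _ hblock

theorem length_left_le (h : ScatN I n u z v) (hz : z = p ++ c :: s) (hp : p.IsChain (· ≠ ·))
    (hu : ∀ x ∈ u, x = a) (hca : ¬ I c a) (hac : a ≠ c) : u.length ≤ n := by
  obtain ⟨us, vs, hus, -, rfl, rfl, rfl, hind⟩ := h
  have hus_a : ∀ i < n, ∀ x ∈ us (i + 1), x = a := fun i hi x hx =>
    hu x (List.mem_flatten.mpr ⟨_, List.mem_map_of_mem (List.mem_range.mpr hi), hx⟩)
  rcases n with _ | m
  · simp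
  obtain ⟨y, hy⟩ := List.exists_mem_of_ne_nil _ (hus (m + 1) (by omega) le_rfl)
  have hvs_ne : ∀ j < m + 1, ∀ x ∈ vs j, x ≠ c := by
    rintro j hj x hx rfl
    exact hca (hus_a m m.lt_succ_self y hy ▸ hind (m + 1) j (by omega) le_rfl hj x hx y hy)
  rw [List.range_succ, List.map_append, List.flatten_append, ← List.append_assoc,
    List.map_singleton, List.flatten_singleton, ← List.append_assoc] at hz
  have hq := prefix_of_append_eq_append_cons hz (by
    simp only [List.mem_append, List.mem_flatten, List.mem_map, List.mem_range, not_or]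
    refine ⟨⟨fun h => hvs_ne 0 (by omega) c h rfl, ?_⟩,
      fun h => hac (hus_a m m.lt_succ_self c h).symm⟩
    rintro ⟨_, ⟨i, hi, rfl⟩, hc⟩
    rcases List.mem_append.mp hc with hc | hc
    · exact hac (hus_a i (by omega) c hc).symm
    · exact hvs_ne (i + 1) (by omega) c hc rfl)
  refine length_flatten_map_range_le_of_length_le_one _ fun i hi =>
    hp.length_le_one_of_infix (hus_a i hi) (List.IsInfix.trans ?_ hq.isInfix)
  rcases Nat.lt_or_ge i m with him | him
  · exact ((List.prefix_append _ _).isInfix.trans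
      (List.infix_of_mem_flatten (List.mem_map.mpr ⟨i, List.mem_range.mpr him, rfl⟩))).trans
      ((List.suffix_append _ _).isInfix.trans (List.prefix_append _ _).isInfix)
  · obtain rfl : i = m := by omega
    exact (List.suffix_append _ _).isInfix

end ScatN

namespace EqScatEqLe

variable {I : α → α → Prop} {N : ℕ} {u z v p s : List α} {a b c : α}

theorem trEq_of_right_nil (h : EqScatEqLe I N u z []) : TrEq I u z := by
  obtain ⟨u', v', hu, ⟨n, -, hscat⟩, hv⟩ := h
  obtain rfl : v' = [] := List.perm_nil.mp hv.perm
  exact hscat.eq_of_right_nil ▸ hu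

theorem length_right_le (h : EqScatEqLe I N u z v) (hz : z = p ++ c :: s) (hcp : c ∉ p)
    (hs : s.IsChain (· ≠ ·)) (hcu : c ∈ u) (hv : ∀ x ∈ v, x = b) (hbc : ¬ I b c) :
    v.length ≤ N := by
  obtain ⟨u', v', hu, ⟨n, hnN, hscat⟩, hv'⟩ := h
  have := hscat.length_right_le hz hcp hs (hu.perm.subset hcu)
    (fun x hx => hv x (hv'.perm.subset hx)) hbc
  rw [← hv'.perm.length_eq]
  omega

theorem length_left_le (h : EqScatEqLe I N u z v) (hz : z = p ++ c :: s)
    (hp : p.IsChain (· ≠ ·)) (hu : ∀ x ∈ u, x = a) (hca : ¬ I c a) (hac : a ≠ c) :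
    u.length ≤ N := by
  obtain ⟨u', v', hu', ⟨n, hnN, hscat⟩, -⟩ := h
  have := hscat.length_left_le hz hp (fun x hx => hu x (hu'.perm.symm.subset hx)) hca hac
  rw [hu'.perm.length_eq]
  omega

end EqScatEqLe

theorem count_eq_of_filter_append_cons_eq [DecidableEq α] {p : α → Bool} {X Y : List α}
    {c d : α} {m m' : ℕ} (hpc : p c) (hpd : p d) (hdc : d ≠ c)
    (h : (X ++ c :: Y).filter p = List.replicate m d ++ c :: List.replicate m' d) :
    X.count d = m ∧ Y.count d = m' := by
  rw [List.filter_append, List.filter_cons_of_pos hpc] at h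
  obtain ⟨hX, -, hY⟩ := (List.append_cons_inj_of_notMem (by simp [hdc.symm])
    (by simp [hdc.symm])).mp h.symm
  exact ⟨by rw [← List.count_filter hpd, ← hX]; simp, by rw [← List.count_filter hpd, ← hY]; simp⟩

theorem mem_matches'_star_iff_of_eq_singleton {P : RegularExpression α} {w x : List α}
    (hP : P.matches' = {w}) : x ∈ P.star.matches' ↔ ∃ k, x = (List.replicate k w).flatten := by
  rw [matches'_star, Language.mem_kstar, hP]
  constructor
  · rintro ⟨L, rfl, hL⟩
    exact ⟨L.length, congrArg List.flatten (List.eq_replicate_iff.mpr ⟨rfl, hL⟩)⟩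
  · rintro ⟨k, rfl⟩
    exact ⟨_, rfl, fun y hy => List.eq_of_mem_replicate hy⟩

theorem mem_matches'_star_char_iff {a : α} {x : List α} :
    x ∈ (char a).star.matches' ↔ ∃ k, x = List.replicate k a := by
  simp only [mem_matches'_star_iff_of_eq_singleton (matches'_char a),
    List.flatten_replicate_singleton]

theorem mem_matches'_star_comp_char_iff {a b : α} {x : List α} :
    x ∈ (char a * char b).star.matches' ↔ ∃ k, x = (List.replicate k [a, b]).flatten :=
  mem_matches'_star_iff_of_eq_singleton (by
    ext y
    simp only [matches'_mul, matches'_char, Language.mem_mul]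
    exact ⟨by rintro ⟨_, rfl, _, rfl, rfl⟩; rfl, fun hy => ⟨[a], rfl, [b], rfl, hy.symm⟩⟩)

def abPow (k : ℕ) : List (Fin 3) := (List.replicate k [0, 1]).flatten

@[simp] theorem count_zero_abPow (k : ℕ) : (abPow k).count 0 = k := by
  simp [abPow, List.count_flatten]

@[simp] theorem count_one_abPow (k : ℕ) : (abPow k).count 1 = k := by
  simp [abPow, List.count_flatten]

def starAStarB : RegularExpression (Fin 3) :=
  RegularExpression.star (char 0) * RegularExpression.star (char 1)

def abStarAOrB : RegularExpression (Fin 3) :=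
  RegularExpression.star (char 0 * char 1) *
    (RegularExpression.star (char 0) + RegularExpression.star (char 1))

def regexE : RegularExpression (Fin 3) :=
  starAStarB * char 2 * RegularExpression.star (char 0 * char 1) *
      (RegularExpression.star (char 0) + RegularExpression.star (char 1)) +
    abStarAOrB * char 2 * starAStarB

theorem mem_starAStarB_iff {x : List (Fin 3)} :
    x ∈ starAStarB.matches' ↔ ∃ i j, x = List.replicate i 0 ++ List.replicate j 1 := by
  simp only [starAStarB, matches'_mul, Language.mem_mul, mem_matches'_star_char_iff]
  aesop

theorem mem_abStarAOrB_iff {x : List (Fin 3)} :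
    x ∈ abStarAOrB.matches' ↔
      ∃ k l, x = abPow k ++ List.replicate l 0 ∨ x = abPow k ++ List.replicate l 1 := by
  simp only [abStarAOrB, matches'_mul, matches'_add, Language.mem_mul,
    Language.mem_add, mem_matches'_star_char_iff, mem_matches'_star_comp_char_iff, abPow]
  aesop

theorem mem_regexE_iff {z : List (Fin 3)} :
    z ∈ regexE.matches' ↔ ∃ X Y, z = X ++ 2 :: Y ∧
      (X ∈ starAStarB.matches' ∧ Y ∈ abStarAOrB.matches' ∨
        X ∈ abStarAOrB.matches' ∧ Y ∈ starAStarB.matches') := by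
  have hE : regexE.matches' = starAStarB.matches' * {[2]} * abStarAOrB.matches' +
      abStarAOrB.matches' * {[2]} * starAStarB.matches' := by
    simp only [regexE, abStarAOrB, matches'_mul, matches'_add, matches'_char]
    rw [← mul_assoc]
  rw [hE]
  simp only [Language.mem_add, Language.mem_mul]
  constructor
  · rintro (⟨_, ⟨X, hX, _, rfl, rfl⟩, Y, hY, rfl⟩ | ⟨_, ⟨X, hX, _, rfl, rfl⟩, Y, hY, rfl⟩)
    · exact ⟨X, Y, by simp, .inl ⟨hX, hY⟩⟩
    · exact ⟨X, Y, by simp, .inr ⟨hX, hY⟩⟩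
  · rintro ⟨X, Y, rfl, ⟨hX, hY⟩ | ⟨hX, hY⟩⟩
    · exact .inl ⟨_, ⟨X, hX, _, rfl, rfl⟩, Y, hY, by simp⟩
    · exact .inr ⟨_, ⟨X, hX, _, rfl, rfl⟩, Y, hY, by simp⟩

theorem eq_of_mem_starAStarB {X : List (Fin 3)} {M : ℕ} (hX : X ∈ starAStarB.matches')
    (h0 : X.count 0 = M) (h1 : X.count 1 = M) : X = List.replicate M 0 ++ List.replicate M 1 := by
  obtain ⟨i, j, rfl⟩ := mem_starAStarB_iff.mp hX
  simp [List.count_replicate] at h0 h1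
  rw [h0, h1]

theorem eq_of_mem_abStarAOrB {X : List (Fin 3)} {M : ℕ} (hX : X ∈ abStarAOrB.matches')
    (h0 : X.count 0 = M) (h1 : X.count 1 = M) : X = abPow M := by
  obtain ⟨k, l, rfl | rfl⟩ := mem_abStarAOrB_iff.mp hX <;>
  · simp [List.count_replicate] at h0 h1
    obtain rfl : l = 0 := by omega
    simp [h0, h1]

theorem eq_of_mem_regexE_of_trEq {I : Fin 3 → Fin 3 → Prop}
    (hI : ∀ x y, I x y → (x = 0 ∧ y = 1) ∨ (x = 1 ∧ y = 0)) {M : ℕ} {z : List (Fin 3)}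
    (hz : z ∈ regexE.matches')
    (hzw : TrEq I z (List.replicate M 0 ++ List.replicate M 1 ++ 2 ::
      (List.replicate M 0 ++ List.replicate M 1))) :
    z = List.replicate M 0 ++ List.replicate M 1 ++ 2 :: abPow M ∨
      z = abPow M ++ 2 :: (List.replicate M 0 ++ List.replicate M 1) := by
  obtain ⟨X, Y, rfl, hXY⟩ := mem_regexE_iff.mp hz
  have hproj : ∀ d e : Fin 3, d = 0 ∧ e = 1 ∨ d = 1 ∧ e = 0 →
      X.count d = M ∧ Y.count d = M := by
    intro d e hde
    have hp : ∀ a b, I a b → decide (a ≠ e) = false ∨ decide (b ≠ e) = false := by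
      intro a b hab
      rcases hI a b hab with ⟨rfl, rfl⟩ | ⟨rfl, rfl⟩ <;>
        rcases hde with ⟨rfl, rfl⟩ | ⟨rfl, rfl⟩ <;> simp
    refine count_eq_of_filter_append_cons_eq (p := fun x => x ≠ e) ?_ ?_ ?_
      ((hzw.filter_eq _ hp).trans ?_) <;>
      rcases hde with ⟨rfl, rfl⟩ | ⟨rfl, rfl⟩ <;> simp
  obtain ⟨hX0, hY0⟩ := hproj 0 1 (.inl ⟨rfl, rfl⟩)
  obtain ⟨hX1, hY1⟩ := hproj 1 0 (.inr ⟨rfl, rfl⟩)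
  rcases hXY with ⟨hX, hY⟩ | ⟨hX, hY⟩
  · left
    rw [eq_of_mem_starAStarB hX hX0 hX1, eq_of_mem_abStarAOrB hY hY0 hY1]
  · right
    rw [eq_of_mem_abStarAOrB hX hX0 hX1, eq_of_mem_starAStarB hY hY0 hY1]

/-- over Σ = {a, b, c} with independence exactly a I b,
E = a✶b✶c(ab)✶(a✶ + b✶) + (ab)✶(a✶ + b✶)ca✶b✶ has no uniform rank. -/
theorem stmt14 (I : Fin 3 → Fin 3 → Prop)
    (hI : ∀ x y, I x y ↔ ((x = 0 ∧ y = 1) ∨ (x = 1 ∧ y = 0)))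
    (A B C : RegularExpression (Fin 3))
    (hA : A = char 0) (hB : B = char 1) (hC : C = char 2)
    (E : RegularExpression (Fin 3))
    (hE : E = plus
      (comp (comp (comp (comp (RegularExpression.star A) (RegularExpression.star B)) C)
          (RegularExpression.star (comp A B)))
        (plus (RegularExpression.star A) (RegularExpression.star B)))
      (comp (comp (comp (RegularExpression.star (comp A B))
          (plus (RegularExpression.star A) (RegularExpression.star B))) C)
        (comp (RegularExpression.star A) (RegularExpression.star B)))) :
    ∀ N : ℕ, ¬ HasUniformRankLe I E.matches' N := by
  subst hA hB hC hE
  intro N hN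
  have hab : I 0 1 := (hI 0 1).mpr (.inl ⟨rfl, rfl⟩)
  have hbc : ¬ I 1 2 := by simp [hI]
  have hca : ¬ I 2 0 := by simp [hI]
  set M := N + 1
  have hw : TrEq I (List.replicate M 0 ++ List.replicate M 1 ++ 2 ::
      (List.replicate M 0 ++ List.replicate M 1))
      (List.replicate M 0 ++ List.replicate M 1 ++ 2 :: abPow M) := by
    have h := (trEq_replicate_append_replicate hab M).append_left
      (List.replicate M 0 ++ List.replicate M 1 ++ [2])
    simp only [List.append_assoc, List.singleton_append] at h ⊢
    exact h
  have hmem : List.replicate M 0 ++ List.replicate M 1 ++ 2 :: abPow M ∈ regexE.matches' :=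
    mem_regexE_iff.mpr ⟨_, _, rfl, .inl ⟨mem_starAStarB_iff.mpr ⟨M, M, rfl⟩,
      mem_abStarAOrB_iff.mpr ⟨M, 0, .inl (by simp)⟩⟩⟩
  obtain ⟨z, hzE, hz⟩ := hN _ ⟨_, hmem, hw⟩
  rcases eq_of_mem_regexE_of_trEq (fun x y => (hI x y).mp) hzE
    ((hz _ [] (List.append_nil _).symm).trEq_of_right_nil).symm with rfl | rfl
  · have hM := (hz (List.replicate M 0 ++ List.replicate M 1 ++ 2 :: List.replicate M 0)
      (List.replicate M 1) (by simp)).length_right_le rfl (by simp)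
      (isChain_ne_flatten_replicate_pair (by decide) M) (by simp)
      (fun _ => List.eq_of_mem_replicate) hbc
    simp [M] at hM
  · have hM := (hz (List.replicate M 0) (List.replicate M 1 ++ 2 ::
      (List.replicate M 0 ++ List.replicate M 1)) (by simp)).length_left_le rfl
      (isChain_ne_flatten_replicate_pair (by decide) M) (fun _ => List.eq_of_mem_replicate)
      hca (by decide)
    simp [M] at hM
end

section
/- Let w, u, v, z₁, …, zₙ be words over Σ such that w = u++v, w ∼ z₁⋯zₙ, and each zᵢ is nonempty and connected. Let u₁, …, uₙ, v₁, …, vₙ be words such that u ∼ u₁⋯uₙ, v ∼ v₁⋯vₙ, zᵢ ∼ uᵢvᵢ for all i, and vⱼ I uᵢ for all j < i. Then the number of indices i with both uᵢ ≠ ε and vᵢ ≠ ε is at most |Σ|. -/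
open RegularExpression
open scoped Classical

universe u

variable {α : Type u}

/-!
A two-colored `zᵢ` is connected and a permutation of `uᵢ ++ vᵢ`, so some letter `aᵢ` of `uᵢ`
depends on some letter of `vᵢ`. If `aᵢ = aⱼ` with `j < i`, then `aⱼ` depends on a letter of `vⱼ`
while lying in `uᵢ`, which is independent of `vⱼ`. Hence `i ↦ aᵢ` is injective.
-/

theorem TrEq.perm_s15 {I : α → α → Prop} {u v : List α} (h : TrEq I u v) : u.Perm v := by
  induction h with
  | @swap x y a b _ =>
      simpa only [List.append_assoc, List.cons_append, List.nil_append] using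
        (List.Perm.swap b a y).append_left x
  | refl u => exact List.Perm.refl u
  | symm _ ih => exact ih.symm
  | trans _ _ ih₁ ih₂ => exact ih₁.trans ih₂

theorem WordConnected.exists_not_indep {I : α → α → Prop} (hirr : Irreflexive I)
    (hsym : Symmetric I) {z x y : List α} (hconn : WordConnected I z) (hp : z.Perm (x ++ y))
    (hx : x ≠ []) (hy : y ≠ []) : ∃ a ∈ x, ∃ b ∈ y, ¬ I a b := by
  by_contra! hindep
  obtain ⟨a, ha⟩ := List.exists_mem_of_ne_nil x hx
  obtain ⟨b, hb⟩ := List.exists_mem_of_ne_nil y hy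
  obtain ⟨i, rfl⟩ := List.mem_iff_get.1 (hp.mem_iff.2 (List.mem_append_left _ ha))
  obtain ⟨j, rfl⟩ := List.mem_iff_get.1 (hp.mem_iff.2 (List.mem_append_right _ hb))
  have hbx : z.get j ∉ x := fun hbx => hirr _ (hindep _ hbx _ hb)
  obtain ⟨p⟩ := hconn i j
  obtain ⟨⟨⟨k, l⟩, hkl⟩, -, hk, hl⟩ := p.exists_boundary_dart {k | z.get k ∈ x} ha hbx
  have hly : z.get l ∈ y :=
    (List.mem_append.1 (hp.mem_iff.1 (List.get_mem _ _))).resolve_left hl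
  exact hkl.2 ⟨hindep _ hk _ hly, hsym (hindep _ hk _ hly)⟩

theorem eq_of_shared_dependent_letter {I : α → α → Prop} (hsym : Symmetric I) {ι : Type*}
    [LinearOrder ι] {us vs : ι → List α} (hind : ∀ i j, j < i → WIndep I (vs j) (us i))
    {i j : ι} {a b b' : α} (hai : a ∈ us i) (hb : b ∈ vs i) (hab : ¬ I a b)
    (haj : a ∈ us j) (hb' : b' ∈ vs j) (hab' : ¬ I a b') : i = j := by
  rcases lt_trichotomy i j with hij | hij | hij
  · exact absurd (hsym (hind j i hij b hb a haj)) hab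
  · exact hij
  · exact absurd (hsym (hind i j hij b' hb' a hai)) hab'

theorem stmt15_general {α : Type u} [Fintype α] (I : α → α → Prop)
    (hirr : Irreflexive I) (hsym : Symmetric I)
    (n : ℕ) (u : List α) (zs us vs : Fin n → List α)
    (hconn : ∀ i, WordConnected I (zs i))
    (hzi : ∀ i, TrEq I (zs i) (us i ++ vs i))
    (hind : ∀ i j : Fin n, j < i → WIndep I (vs j) (us i)) :
    {i : Fin n | us i ≠ [] ∧ vs i ≠ []}.ncard ≤ Fintype.card α := by
  set S := {i : Fin n | us i ≠ [] ∧ vs i ≠ []}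
  have hdep : ∀ i : S, ∃ a ∈ us i, ∃ b ∈ vs i, ¬ I a b := fun i =>
    (hconn i).exists_not_indep hirr hsym (hzi i).perm_s15 i.2.1 i.2.2
  choose a hau b hbv hab using hdep
  have ha_inj : Function.Injective a := fun i j hij =>
    Subtype.ext <| eq_of_shared_dependent_letter hsym hind (hau i) (hbv i) (hab i)
      (hij ▸ hau j) (hbv j) (hij ▸ hab j)
  calc S.ncard = Nat.card S := (Nat.card_coe_set_eq S).symm
    _ ≤ Nat.card α := Nat.card_le_card_of_injective a ha_inj
    _ = Fintype.card α := Nat.card_eq_fintype_card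

/-- at most |Σ| of the zᵢ can be two-colored. -/
theorem stmt15 {α : Type u} [Fintype α] (I : α → α → Prop)
    (hirr : Irreflexive I) (hsym : Symmetric I)
    (n : ℕ) (w u v : List α) (zs us vs : Fin n → List α)
    (hw : w = u ++ v)
    (hwz : TrEq I w (List.ofFn zs).flatten)
    (hne : ∀ i, zs i ≠ [])
    (hconn : ∀ i, WordConnected I (zs i))
    (hu : TrEq I u (List.ofFn us).flatten)
    (hv : TrEq I v (List.ofFn vs).flatten)
    (hzi : ∀ i, TrEq I (zs i) (us i ++ vs i))
    (hind : ∀ i j : Fin n, j < i → WIndep I (vs j) (us i)) :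
    {i : Fin n | us i ≠ [] ∧ vs i ≠ []}.ncard ≤ Fintype.card α :=
  stmt15_general I hirr hsym n u zs us vs hconn hzi hind
end

section
/- The refined Antimirov reordering parts-of-derivatives along a letter are correct: for every regular expression E over Σ, letter a, and words v_l, v_r, one has (v_l I a and v_l ++ [a] ++ v_r ∈ ⟦E⟧) if and only if there exist E_l, E_r with E →^I (a; E_l, E_r), v_l ∈ ⟦E_l⟧ and v_r ∈ ⟦E_r⟧. -/
open RegularExpression
open scoped Classical

universe u

variable {α : Type u}

/-! The side condition `v_l I a` is what makes both inductions go through: `⟦R_a E⟧` consists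
exactly of the words of `⟦E⟧` all of whose letters are independent of `a`, so whatever part of
`v_l` falls in an earlier factor of a product, or in earlier iterations of a star, is a word of
the corresponding `R_a` component, and conversely. Locating the occurrence of `a` in a product or
in a star iteration is then pure list bookkeeping. -/

@[simp]
theorem Language.mem_singleton_iff {v w : List α} : v ∈ ({w} : Language α) ↔ v = w :=
  Iff.rfl

theorem List.append_cons_eq_append_iff {l r x y : List α} {a : α} :
    l ++ a :: r = x ++ y ↔
      (∃ t, x = l ++ a :: t ∧ r = t ++ y) ∨ ∃ c, l = x ++ c ∧ y = c ++ a :: r := by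
  constructor
  · intro h
    rcases List.append_eq_append_iff.1 h with ⟨_ | ⟨b, t⟩, rfl, hy⟩ | ⟨c, rfl, rfl⟩
    · exact Or.inr ⟨[], by simp, by simpa using hy.symm⟩
    · obtain ⟨rfl, rfl⟩ := List.cons_eq_cons.1 hy
      exact Or.inl ⟨t, rfl, rfl⟩
    · exact Or.inr ⟨c, rfl, rfl⟩
  · rintro (⟨t, rfl, rfl⟩ | ⟨c, rfl, rfl⟩) <;> simp

theorem List.exists_of_append_cons_eq_flatten {L : List (List α)} {l r : List α} {a : α}
    (h : l ++ a :: r = L.flatten) :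
    ∃ S₁ p q S₂,
      L = S₁ ++ (p ++ a :: q) :: S₂ ∧ l = S₁.flatten ++ p ∧ r = q ++ S₂.flatten := by
  rcases List.append_eq_flatten_iff.1 h with
    ⟨S₁, S, rfl, rfl, hS⟩ | ⟨S₁, p, c, q, S₂, rfl, rfl, hc⟩
  · obtain ⟨S₀, q, S₂, rfl, hS₀, rfl⟩ := List.cons_eq_flatten_iff.1 hS
    exact ⟨S₁ ++ S₀, [], q, S₂, by simp, by simp [List.flatten_eq_nil_iff.2 hS₀], rfl⟩
  · obtain ⟨rfl, rfl⟩ := List.cons_eq_cons.1 (hc.trans (List.cons_append ..))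
    exact ⟨S₁, p, q, S₂, rfl, rfl, rfl⟩

section RefinedAntimirov

open scoped Computability

variable {I : α → α → Prop} {a : α}

theorem mem_matches'_Rexp_iff {E : RegularExpression α} {v : List α} :
    v ∈ (Rexp I a E).matches' ↔ v ∈ E.matches' ∧ ∀ b ∈ v, I a b := by
  induction E generalizing v with
  | zero => simp [Rexp]
  | epsilon => simp +contextual [Rexp, Language.mem_one]
  | char b => by_cases h : I a b <;> simp +contextual [Rexp, h]
  | plus E F ihE ihF =>
    simp only [Rexp, plus_def, matches', Language.mem_add, ihE, ihF, or_and_right]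
  | comp E F ihE ihF =>
    simp only [Rexp, comp_def, matches', Language.mem_mul, ihE, ihF]
    constructor
    · rintro ⟨x, ⟨hx, hxa⟩, y, ⟨hy, hya⟩, rfl⟩
      exact ⟨⟨x, hx, y, hy, rfl⟩, List.forall_mem_append.2 ⟨hxa, hya⟩⟩
    · rintro ⟨⟨x, hx, y, hy, rfl⟩, hxya⟩
      obtain ⟨hxa, hya⟩ := List.forall_mem_append.1 hxya
      exact ⟨x, ⟨hx, hxa⟩, y, ⟨hy, hya⟩, rfl⟩
  | star E ih =>
    simp only [Rexp, matches', Language.mem_kstar, ih]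
    constructor
    · rintro ⟨L, rfl, hL⟩
      exact ⟨⟨L, rfl, fun y hy => (hL y hy).1⟩,
        List.forall_mem_flatten.2 fun y hy => (hL y hy).2⟩
    · rintro ⟨⟨L, rfl, hL⟩, hLa⟩
      exact ⟨L, rfl, fun y hy => ⟨hL y hy, List.forall_mem_flatten.1 hLa y hy⟩⟩

theorem exists_RAntim_of_mem_matches' {E : RegularExpression α} {vl vr : List α}
    (hvl : ∀ b ∈ vl, I a b) (h : vl ++ a :: vr ∈ E.matches') :
    ∃ El Er, RAntim I E a El Er ∧ vl ∈ El.matches' ∧ vr ∈ Er.matches' := by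
  induction E generalizing vl vr with
  | zero => simp at h
  | epsilon => simp [Language.mem_one] at h
  | char b =>
    obtain ⟨rfl, rfl, rfl⟩ : vl = [] ∧ a = b ∧ vr = [] := by
      simpa [List.append_eq_singleton_iff] using h
    exact ⟨1, 1, .chr a, rfl, rfl⟩
  | plus E F ihE ihF =>
    rcases h with h | h
    · obtain ⟨El, Er, hE, hl, hr⟩ := ihE hvl h
      exact ⟨El, Er, .plusL hE, hl, hr⟩
    · obtain ⟨Fl, Fr, hF, hl, hr⟩ := ihF hvl h
      exact ⟨Fl, Fr, .plusR hF, hl, hr⟩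
  | comp E F ihE ihF =>
    obtain ⟨x, hx, y, hy, hxy⟩ := Language.mem_mul.1 h
    rcases List.append_cons_eq_append_iff.1 hxy.symm with ⟨t, rfl, rfl⟩ | ⟨c, rfl, rfl⟩
    · obtain ⟨El, Er, hE, hl, ht⟩ := ihE hvl hx
      exact ⟨El, Er.comp F, .compL hE, hl, Language.append_mem_mul ht hy⟩
    · obtain ⟨hxa, hca⟩ := List.forall_mem_append.1 hvl
      obtain ⟨Fl, Fr, hF, hc, hr⟩ := ihF hca hy
      exact ⟨(Rexp I a E).comp Fl, Fr, .compR hF,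
        Language.append_mem_mul (mem_matches'_Rexp_iff.2 ⟨hx, hxa⟩) hc, hr⟩
  | star E ih =>
    obtain ⟨L, hL, hLE⟩ := Language.mem_kstar.1 h
    obtain ⟨S₁, p, q, S₂, rfl, rfl, rfl⟩ := List.exists_of_append_cons_eq_flatten hL
    simp only [List.mem_append, List.mem_cons] at hLE
    obtain ⟨hS₁a, hpa⟩ := List.forall_mem_append.1 hvl
    obtain ⟨El, Er, hE, hp, hq⟩ := ih hpa (hLE _ (.inr (.inl rfl)))
    have hS₁ : S₁.flatten ∈ (Rexp I a E.star).matches' :=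
      mem_matches'_Rexp_iff.2 ⟨Language.join_mem_kstar fun y hy => hLE y (.inl hy), hS₁a⟩
    have hS₂ : S₂.flatten ∈ E.star.matches' :=
      Language.join_mem_kstar fun y hy => hLE y (.inr (.inr hy))
    exact ⟨_, _, .st hE, Language.append_mem_mul hS₁ hp, Language.append_mem_mul hq hS₂⟩

theorem RAntim.mem_matches' {E El Er : RegularExpression α} (h : RAntim I E a El Er)
    {vl vr : List α} (hl : vl ∈ El.matches') (hr : vr ∈ Er.matches') :
    (∀ b ∈ vl, I a b) ∧ vl ++ a :: vr ∈ E.matches' := by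
  induction h generalizing vl vr with
  | chr a =>
    rw [matches', Language.mem_one] at hl hr
    simp [hl, hr]
  | plusL _ ih => exact (ih hl hr).imp_right Or.inl
  | plusR _ ih => exact (ih hl hr).imp_right Or.inr
  | compL _ ih =>
    obtain ⟨t, ht, y, hy, rfl⟩ := hr
    obtain ⟨hvl, h⟩ := ih hl ht
    exact ⟨hvl, by simpa using Language.append_mem_mul h hy⟩
  | compR _ ih =>
    obtain ⟨x, hx, p, hp, rfl⟩ := hl
    obtain ⟨hxE, hxa⟩ := mem_matches'_Rexp_iff.1 hx
    obtain ⟨hpa, h⟩ := ih hp hr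
    exact ⟨List.forall_mem_append.2 ⟨hxa, hpa⟩,
      by simpa using Language.append_mem_mul hxE h⟩
  | @st E a El Er _ ih =>
    obtain ⟨x, hx, p, hp, rfl⟩ := hl
    obtain ⟨q, hq, y, hy, rfl⟩ := hr
    obtain ⟨hxE, hxa⟩ := mem_matches'_Rexp_iff (E := E.star).1 hx
    obtain ⟨hpa, h⟩ := ih hp hq
    have hstar : E.matches'∗ * (E.matches' * E.matches'∗) ≤ E.matches'∗ := by
      grw [mul_kstar_le_kstar, kstar_mul_kstar]
    have hmem := hstar (Language.append_mem_mul hxE (Language.append_mem_mul h hy))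
    simp only [List.append_assoc, List.cons_append] at hmem ⊢
    exact ⟨List.forall_mem_append.2 ⟨hxa, hpa⟩, hmem⟩

theorem exists_RAntim_iff {E : RegularExpression α} {vl vr : List α} :
    ((∀ b ∈ vl, I a b) ∧ vl ++ a :: vr ∈ E.matches') ↔
      ∃ El Er, RAntim I E a El Er ∧ vl ∈ El.matches' ∧ vr ∈ Er.matches' :=
  ⟨fun h => exists_RAntim_of_mem_matches' h.1 h.2,
    fun ⟨_, _, h, hl, hr⟩ => h.mem_matches' hl hr⟩

end RefinedAntimirov

theorem stmt17_general {α : Type u} (I : α → α → Prop)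
    (hsym : Symmetric I) (E : RegularExpression α)
    (a : α) (vl vr : List α) :
    (WIndep I vl [a] ∧ vl ++ a :: vr ∈ E.matches') ↔
      ∃ El Er, RAntim I E a El Er ∧ vl ∈ El.matches' ∧ vr ∈ Er.matches' := by
  have hvl : WIndep I vl [a] ↔ ∀ b ∈ vl, I a b := by
    simp only [WIndep, List.mem_singleton, forall_eq]
    exact forall₂_congr fun _ _ => ⟨fun h => hsym h, fun h => hsym h⟩
  rw [hvl]
  exact exists_RAntim_iff

/-- correctness of the refined Antimirov parts-of-derivatives along a letter. -/
theorem stmt17 {α : Type u} [Fintype α] (I : α → α → Prop)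
    (hirr : Irreflexive I) (hsym : Symmetric I) (E : RegularExpression α)
    (a : α) (vl vr : List α) :
    (WIndep I vl [a] ∧ vl ++ a :: vr ∈ E.matches') ↔
      ∃ El Er, RAntim I E a El Er ∧ vl ∈ El.matches' ∧ vr ∈ Er.matches' :=
  stmt17_general I hsym E a vl vr
end
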